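/- arXiv:2510.02405 — 2 statements merged into one kernel-verified Lean document; each statement's English description precedes it below -/
import Mathlib

section
/- Let O ∈ ℝ^{n×m} have all columns nonzero, let M ∈ ℝ^{p×n} satisfy MᵀM = I_n, and let N ∈ ℝ^{m×m} be diagonal with strictly positive diagonal entries. Then the matrix S = M O N ∈ ℝ^{p×m} has all columns nonzero and S_c(S) = S_c(O). -/
open Matrix

/-- Euclidean dot product on `ℝ^n`. -/
noncomputable def dotv {n : ℕ} (u v : Fin n → ℝ) : ℝ := ∑ i, u i * v i

/-- Euclidean norm on `ℝ^n`. -/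
noncomputable def enormv {n : ℕ} (u : Fin n → ℝ) : ℝ := Real.sqrt (dotv u u)

/-- Arithmetic mean of a vector. -/
noncomputable def meanv {n : ℕ} (f : Fin n → ℝ) : ℝ := (∑ i, f i) / n

/-- Mean-centered vector `f̄ = f - Mean(f)·𝟙`. -/
noncomputable def centv {n : ℕ} (f : Fin n → ℝ) : Fin n → ℝ := fun i => f i - meanv f

/-- Variance of a vector: `Var(f) = (1/n)‖f̄‖²`. -/
noncomputable def varv {n : ℕ} (f : Fin n → ℝ) : ℝ := (∑ i, (centv f i) ^ 2) / n

/-- The `j`-th column of a matrix. -/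
noncomputable def col {n m : ℕ} (A : Matrix (Fin n) (Fin m) ℝ) (j : Fin m) : Fin n → ℝ :=
  fun i => A i j

/-- Cosine similarity matrix: `S_c(A)_{jk} = (A_j·A_k)/(‖A_j‖‖A_k‖)`. -/
noncomputable def cosSim {n m : ℕ} (A : Matrix (Fin n) (Fin m) ℝ) : Matrix (Fin m) (Fin m) ℝ :=
  fun j k => dotv (_root_.col A j) (_root_.col A k) / (enormv (_root_.col A j) * enormv (_root_.col A k))

/-- Column-wise mean centering of a matrix: `Ā_j = A_j − Mean(A_j)·𝟙`. -/
noncomputable def centM {n m : ℕ} (A : Matrix (Fin n) (Fin m) ℝ) : Matrix (Fin n) (Fin m) ℝ :=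
  fun i j => A i j - meanv (_root_.col A j)

/-- Pearson correlation matrix: cosine similarity of the centered columns. -/
noncomputable def corrM {n m : ℕ} (A : Matrix (Fin n) (Fin m) ℝ) : Matrix (Fin m) (Fin m) ℝ :=
  cosSim (centM A)

/-- Frobenius norm of a matrix. -/
noncomputable def frob {n m : ℕ} (A : Matrix (Fin n) (Fin m) ℝ) : ℝ :=
  Real.sqrt (∑ i, ∑ j, (A i j) ^ 2)

/-- Given the diagonal entries `σ` of a diagonal matrix `Σ` with nonnegative entries,
`Isig σ` is the diagonal matrix `I_Σ` with `(I_Σ)_{ii} = 1` if `Σ_{ii} > 0` and `0` otherwise. -/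
noncomputable def Isig {n : ℕ} (σ : Fin n → ℝ) : Matrix (Fin n) (Fin n) ℝ :=
  Matrix.diagonal (fun i => if 0 < σ i then (1 : ℝ) else 0)

/- A matrix with orthonormal columns is an isometry, so it preserves dot products and hence
cosines; a positive diagonal factor on the right only rescales each column by a positive
number, which cancels between numerator and denominator of the cosine. -/

noncomputable def cosv {n : ℕ} (u v : Fin n → ℝ) : ℝ := dotv u v / (enormv u * enormv v)

lemma cosSim_apply {n m : ℕ} (A : Matrix (Fin n) (Fin m) ℝ) (j k : Fin m) :
    cosSim A j k = cosv (_root_.col A j) (_root_.col A k) := rfl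

lemma col_mul {n m p : ℕ} (M : Matrix (Fin p) (Fin n) ℝ) (A : Matrix (Fin n) (Fin m) ℝ)
    (j : Fin m) : _root_.col (M * A) j = M *ᵥ _root_.col A j := by
  ext i
  simp only [_root_.col, mul_apply, mulVec, dotProduct]

lemma col_mul_diagonal {n m : ℕ} (A : Matrix (Fin n) (Fin m) ℝ) (d : Fin m → ℝ) (j : Fin m) :
    _root_.col (A * diagonal d) j = d j • _root_.col A j := by
  ext i
  simp only [_root_.col, mul_diagonal, Pi.smul_apply, smul_eq_mul, mul_comm]

lemma dotv_smul_smul {n : ℕ} (a b : ℝ) (u v : Fin n → ℝ) :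
    dotv (a • u) (b • v) = a * b * dotv u v := by
  simp only [dotv, Pi.smul_apply, smul_eq_mul, Finset.mul_sum]
  exact Finset.sum_congr rfl fun i _ => by ring

lemma enormv_smul {n : ℕ} (a : ℝ) (u : Fin n → ℝ) : enormv (a • u) = |a| * enormv u := by
  rw [enormv, enormv, dotv_smul_smul, Real.sqrt_mul (mul_self_nonneg a), Real.sqrt_mul_self_eq_abs]

lemma cosv_smul_smul {n : ℕ} {a b : ℝ} (ha : 0 < a) (hb : 0 < b) (u v : Fin n → ℝ) :
    cosv (a • u) (b • v) = cosv u v := by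
  rw [cosv, cosv, dotv_smul_smul, enormv_smul, enormv_smul, abs_of_pos ha, abs_of_pos hb,
    mul_mul_mul_comm, mul_div_mul_left _ _ (mul_pos ha hb).ne']

section Isometry

variable {n p : ℕ} {M : Matrix (Fin p) (Fin n) ℝ}

lemma mulVec_injective_of_transpose_mul_self_eq_one (hM : Mᵀ * M = 1) :
    Function.Injective (M *ᵥ ·) :=
  Function.LeftInverse.injective (g := (Mᵀ *ᵥ ·)) fun u => by
    simp only [mulVec_mulVec, hM, one_mulVec]

lemma dotv_mulVec_of_transpose_mul_self_eq_one (hM : Mᵀ * M = 1) (u v : Fin n → ℝ) :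
    dotv (M *ᵥ u) (M *ᵥ v) = dotv u v := by
  change (M *ᵥ u) ⬝ᵥ (M *ᵥ v) = u ⬝ᵥ v
  rw [dotProduct_mulVec, ← vecMul_transpose, vecMul_vecMul, hM, vecMul_one]

lemma cosv_mulVec_of_transpose_mul_self_eq_one (hM : Mᵀ * M = 1) (u v : Fin n → ℝ) :
    cosv (M *ᵥ u) (M *ᵥ v) = cosv u v := by
  simp only [cosv, enormv, dotv_mulVec_of_transpose_mul_self_eq_one hM]

end Isometry

/-- Applying a matrix with orthonormal columns on the left and a positive
diagonal matrix on the right preserves nonzeroness of columns and the cosine similarity. -/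
theorem cosSim_of_orthonormal_mul_diag {n m p : ℕ}
    (O : Matrix (Fin n) (Fin m) ℝ) (hO : ∀ j, _root_.col O j ≠ 0)
    (M : Matrix (Fin p) (Fin n) ℝ) (hM : Mᵀ * M = 1)
    (d : Fin m → ℝ) (hd : ∀ j, 0 < d j)
    (S : Matrix (Fin p) (Fin m) ℝ) (hS : S = M * O * Matrix.diagonal d) :
    (∀ j, _root_.col S j ≠ 0) ∧ cosSim S = cosSim O := by
  have hcol : ∀ j, _root_.col S j = d j • (M *ᵥ _root_.col O j) := fun j => by
    rw [hS, col_mul_diagonal, col_mul]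
  refine ⟨fun j => ?_, ?_⟩
  · rw [hcol]
    exact smul_ne_zero (hd j).ne' fun h =>
      hO j (mulVec_injective_of_transpose_mul_self_eq_one hM (h.trans (mulVec_zero M).symm))
  · ext j k
    rw [cosSim_apply, cosSim_apply, hcol, hcol, cosv_smul_smul (hd j) (hd k),
      cosv_mulVec_of_transpose_mul_self_eq_one hM]
end

section
/- Let n ≤ p, let O ∈ ℝ^{n×m} and S ∈ ℝ^{p×m} have all columns nonzero, and suppose S_c(O) = S_c(S). Then there exist a matrix M ∈ ℝ^{p×n} with MᵀM = I_n and a diagonal matrix N ∈ ℝ^{m×m} with strictly positive diagonal entries such that M O N = S. -/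
/-!
Dividing each column by its norm turns both `O` and `S` into matrices whose Gram matrix is the
common cosine similarity matrix. Two families of vectors with the same Gram matrix differ by a
linear isometry: `∑ cⱼ uⱼ ↦ ∑ cⱼ vⱼ` is well defined and norm preserving on the span of the `uⱼ`
because the norms of both sides are computed from the Gram matrix, and it extends to the whole
space. Applied in `ℝᵖ` to the normalized columns of `O` (padded by zeros) and of `S`, this gives an
orthogonal `Q`; then `M` is `Q` restricted to the first `n` coordinates and `N` rescales column `j`
by `‖Sⱼ‖ / ‖Oⱼ‖`.
-/

open Matrix

namespace LinearMap

theorem exists_comp_rangeRestrict_eq_of_ker_le {R M N P : Type*} [Ring R] [AddCommGroup M]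
    [AddCommGroup N] [AddCommGroup P] [Module R M] [Module R N] [Module R P]
    (f : M →ₗ[R] N) (g : M →ₗ[R] P) (h : ker f ≤ ker g) :
    ∃ L : range f →ₗ[R] P, L ∘ₗ f.rangeRestrict = g :=
  ⟨(ker f).liftQ g h ∘ₗ f.quotKerEquivRange.symm.toLinearMap, by
    ext x
    simp only [comp_apply, LinearEquiv.coe_coe]
    rw [show f.rangeRestrict x = ⟨f x, mem_range_self f x⟩ from rfl,
      quotKerEquivRange_symm_apply_image]
    rfl⟩

end LinearMap

open scoped InnerProductSpace ComplexConjugate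

section Gram

variable {𝕜 V ι : Type*} [RCLike 𝕜] [NormedAddCommGroup V] [InnerProductSpace 𝕜 V] [Fintype ι]

theorem inner_sum_smul_sum_smul (u : ι → V) (c c' : ι → 𝕜) :
    ⟪∑ i, c i • u i, ∑ j, c' j • u j⟫_𝕜 = ∑ i, ∑ j, conj (c i) * c' j * ⟪u i, u j⟫_𝕜 := by
  simp only [sum_inner, inner_sum, inner_smul_left, inner_smul_right, Finset.mul_sum]
  rw [Finset.sum_comm]
  exact Finset.sum_congr rfl fun _ _ => Finset.sum_congr rfl fun _ _ => by ring

theorem exists_linearIsometry_apply_eq_of_inner_eq [FiniteDimensional 𝕜 V] {u v : ι → V}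
    (h : ∀ i j, ⟪u i, u j⟫_𝕜 = ⟪v i, v j⟫_𝕜) :
    ∃ T : V →ₗᵢ[𝕜] V, ∀ i, T (u i) = v i := by
  classical
  set U := Fintype.linearCombination 𝕜 u
  set W := Fintype.linearCombination 𝕜 v
  have norm_eq (c : ι → 𝕜) : ‖W c‖ = ‖U c‖ := by
    simp only [norm_eq_sqrt_re_inner (𝕜 := 𝕜), U, W, Fintype.linearCombination_apply,
      inner_sum_smul_sum_smul, h]
  obtain ⟨L, hL⟩ := U.exists_comp_rangeRestrict_eq_of_ker_le W fun c hc => by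
    simpa [← norm_eq_zero, norm_eq] using hc
  let L' : LinearMap.range U →ₗᵢ[𝕜] V :=
    { toLinearMap := L
      norm_map' := by
        rintro ⟨_, c, rfl⟩
        show ‖L (U.rangeRestrict c)‖ = ‖U c‖
        rw [← LinearMap.comp_apply, hL, norm_eq] }
  have single_eq (w : ι → V) (i : ι) : Fintype.linearCombination 𝕜 w (Pi.single i 1) = w i := by
    rw [Fintype.linearCombination_apply_single, one_smul]
  refine ⟨L'.extend, fun i => ?_⟩
  rw [← single_eq u, L'.extend_apply ⟨_, LinearMap.mem_range_self U _⟩, ← single_eq v]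
  exact congr($hL _)

end Gram

namespace Matrix

theorem transpose_submatrix_one_id_mul_self {R ι κ : Type*} [Semiring R] [Fintype κ]
    [DecidableEq κ] [DecidableEq ι] (e : ι ↪ κ) :
    ((1 : Matrix κ κ R).submatrix id e)ᵀ * (1 : Matrix κ κ R).submatrix id e = 1 := by
  rw [transpose_submatrix, ← submatrix_mul _ _ _ id _ Function.bijective_id, transpose_one,
    mul_one, submatrix_one_embedding]

variable {𝕜 m n : Type*} [RCLike 𝕜] [Fintype m] [DecidableEq m] [Fintype n]

theorem conjTranspose_mul_self_eq_one_of_toEuclideanLin_eq [DecidableEq n] {A : Matrix m n 𝕜}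
    {T : EuclideanSpace 𝕜 n →ₗᵢ[𝕜] EuclideanSpace 𝕜 m} (hA : toEuclideanLin A = T.toLinearMap) :
    Aᴴ * A = 1 :=
  toEuclideanLin.injective <| by
    rw [toLpLin_mul_same, toEuclideanLin_conjTranspose_eq_adjoint, hA, T.adjoint_comp_self',
      toLpLin_one]

theorem exists_mem_unitaryGroup_mul_eq_of_conjTranspose_mul_self_eq {A B : Matrix m n 𝕜}
    (h : Aᴴ * A = Bᴴ * B) : ∃ Q ∈ unitaryGroup m 𝕜, Q * A = B := by
  obtain ⟨T, hT⟩ := exists_linearIsometry_apply_eq_of_inner_eq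
    (u := fun j => WithLp.toLp 2 (Aᵀ j)) (v := fun j => WithLp.toLp 2 (Bᵀ j))
    fun i j => by rw [inner_matrix_col_col, inner_matrix_col_col, h]
  set Q := toEuclideanLin.symm T.toLinearMap
  have hQ : toEuclideanLin Q = T.toLinearMap := LinearEquiv.apply_symm_apply _ _
  refine ⟨Q, mem_unitaryGroup_iff'.mpr (conjTranspose_mul_self_eq_one_of_toEuclideanLin_eq hQ), ?_⟩
  ext k j
  have := congr(WithLp.ofLp $(hT j) k)
  rw [← T.coe_toLinearMap, ← hQ, toLpLin_toLp] at this
  simpa [mul_apply, mulVec, dotProduct] using this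

end Matrix

noncomputable def colNorms {n m : ℕ} (A : Matrix (Fin n) (Fin m) ℝ) : Fin m → ℝ :=
  fun j => enormv (_root_.col A j)

theorem enormv_eq_norm {n : ℕ} (u : Fin n → ℝ) : enormv u = ‖WithLp.toLp 2 u‖ := by
  simp [EuclideanSpace.norm_eq, enormv, dotv, sq]

theorem enormv_pos {n : ℕ} {u : Fin n → ℝ} (hu : u ≠ 0) : 0 < enormv u := by
  rw [enormv_eq_norm, norm_pos_iff]
  exact (WithLp.toLp_eq_zero 2).not.mpr hu

theorem cosSim_eq_transpose_mul_self {n m : ℕ} (A : Matrix (Fin n) (Fin m) ℝ) :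
    cosSim A = (A * diagonal (colNorms A)⁻¹)ᵀ * (A * diagonal (colNorms A)⁻¹) := by
  ext j k
  rw [transpose_mul, diagonal_transpose, Matrix.mul_assoc, ← Matrix.mul_assoc Aᵀ,
    diagonal_mul, mul_diagonal, cosSim, div_eq_mul_inv, mul_inv]
  simp only [colNorms, Pi.inv_apply, mul_apply, transpose_apply, dotv, _root_.col]
  ring

/-- If two matrices with nonzero columns (with `n ≤ p`) have the same cosine
similarity matrix, then one is obtained from the other via a matrix with orthonormal
columns and a positive diagonal rescaling. -/
theorem exists_orthonormal_diag_of_cosSim_eq {n m p : ℕ} (hnp : n ≤ p)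
    (O : Matrix (Fin n) (Fin m) ℝ) (S : Matrix (Fin p) (Fin m) ℝ)
    (hO : ∀ j, _root_.col O j ≠ 0) (hS : ∀ j, _root_.col S j ≠ 0)
    (h : cosSim O = cosSim S) :
    ∃ (M : Matrix (Fin p) (Fin n) ℝ) (d : Fin m → ℝ),
      Mᵀ * M = 1 ∧ (∀ j, 0 < d j) ∧ M * O * Matrix.diagonal d = S := by
  set J := (1 : Matrix (Fin p) (Fin p) ℝ).submatrix id (Fin.castLEEmb hnp)
  have hJ : Jᵀ * J = 1 := transpose_submatrix_one_id_mul_self _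
  set a := colNorms O
  set b := colNorms S
  have ha (j : Fin m) : 0 < a j := enormv_pos (hO j)
  have hb (j : Fin m) : 0 < b j := enormv_pos (hS j)
  obtain ⟨Q, hQ, hQA⟩ := exists_mem_unitaryGroup_mul_eq_of_conjTranspose_mul_self_eq
    (A := J * (O * diagonal a⁻¹)) (B := S * diagonal b⁻¹) <| by
      simp only [conjTranspose_eq_transpose_of_trivial]
      rw [transpose_mul, Matrix.mul_assoc, ← Matrix.mul_assoc Jᵀ, hJ, Matrix.one_mul,
        ← cosSim_eq_transpose_mul_self, h, cosSim_eq_transpose_mul_self]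
  rw [mem_unitaryGroup_iff', star_eq_conjTranspose, conjTranspose_eq_transpose_of_trivial] at hQ
  refine ⟨Q * J, b / a, ?_, fun j => div_pos (hb j) (ha j), ?_⟩
  · rw [transpose_mul, Matrix.mul_assoc, ← Matrix.mul_assoc Qᵀ, hQ, Matrix.one_mul, hJ]
  · calc Q * J * O * diagonal (b / a) = Q * (J * (O * diagonal a⁻¹)) * diagonal b := by
          simp only [Matrix.mul_assoc, diagonal_mul_diagonal, div_eq_inv_mul, Pi.mul_def]
      _ = S := by
          have hbb : (fun j => b⁻¹ j * b j) = fun _ => 1 :=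
            funext fun j => inv_mul_cancel₀ (hb j).ne'
          rw [hQA, Matrix.mul_assoc, diagonal_mul_diagonal, hbb, diagonal_one, Matrix.mul_one]
end
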